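/- Let 𝔻 be a generalized state divergence, let N_{A'B'→AB} be a bipartite quantum channel, let Θ̂ be a quantum superchannel from (A',A) to (C',C) that preserves the completely mixing map, i.e., Θ̂(R_{A'→A}) = R_{C'→C}, and let Θ be an arbitrary quantum superchannel from (B',B) to (D',D). Then the generalized conditional entropy is nondecreasing under their local action: 𝐒[A|B]_N ≤ 𝐒[C|D]_{(Θ̂⊗Θ)(N)}. -/

import Mathlib

namespace QIT

open Matrix
open scoped Kronecker ComplexOrder

noncomputable section

/-- Square matrices over `ℂ` indexed by `ι`, the operators on the Hilbert space `ℂ^ι`. -/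
abbrev Mat (ι : Type) : Type := Matrix ι ι ℂ

/-- Linear maps between matrix spaces. -/
abbrev MatMap (ι κ : Type) : Type := Mat ι →ₗ[ℂ] Mat κ

/-- The tensor product `L₁ ⊗ L₂` of two linear maps on matrix spaces, defined entrywise
via matrix units. -/
def tensorMap {ι₁ κ₁ ι₂ κ₂ : Type} [Fintype ι₁] [DecidableEq ι₁] [Fintype ι₂] [DecidableEq ι₂]
    (L₁ : MatMap ι₁ κ₁) (L₂ : MatMap ι₂ κ₂) : MatMap (ι₁ × ι₂) (κ₁ × κ₂) where
  toFun X := Matrix.of fun p q => ∑ k₁, ∑ l₁, ∑ k₂, ∑ l₂,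
      X (k₁, k₂) (l₁, l₂) * L₁ (Matrix.single k₁ l₁ 1) p.1 q.1
        * L₂ (Matrix.single k₂ l₂ 1) p.2 q.2
  map_add' X Y := by
    ext p q
    simp [Matrix.add_apply, add_mul, Finset.sum_add_distrib]
  map_smul' c X := by
    ext p q
    simp [Matrix.smul_apply, smul_eq_mul, Finset.mul_sum, mul_assoc]

/-- A quantum state: positive semidefinite with unit trace. -/
def IsState {ι : Type} [Fintype ι] (ρ : Mat ι) : Prop :=
  ρ.PosSemidef ∧ ρ.trace = 1

/-- Trace preserving linear map. -/
def TracePreserving {ι κ : Type} [Fintype ι] [Fintype κ] (L : MatMap ι κ) : Prop :=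
  ∀ X, (L X).trace = X.trace

/-- Complete positivity: `id_R ⊗ L` preserves positive semidefiniteness for every
finite-dimensional reference system `R`. -/
def IsCP {ι κ : Type} [Fintype ι] [DecidableEq ι] [Fintype κ] (L : MatMap ι κ) : Prop :=
  ∀ (r : ℕ) (X : Mat (Fin r × ι)), X.PosSemidef →
    (tensorMap (LinearMap.id : MatMap (Fin r) (Fin r)) L X).PosSemidef

/-- A quantum channel: completely positive and trace preserving. -/
def IsChannel {ι κ : Type} [Fintype ι] [DecidableEq ι] [Fintype κ] (L : MatMap ι κ) : Prop :=
  IsCP L ∧ TracePreserving L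

/-- The completely mixing (depolarizing) map `X ↦ tr(X) · 1`. -/
def Rmap (ι κ : Type) [Fintype ι] [DecidableEq κ] : MatMap ι κ where
  toFun X := X.trace • (1 : Mat κ)
  map_add' X Y := by simp [Matrix.trace_add, add_smul]
  map_smul' c X := by simp [Matrix.trace_smul, mul_smul]

/-- The unitary channel of relabeling induced by an equivalence of index types. -/
def reindexMap {ι κ : Type} (e : ι ≃ κ) : MatMap ι κ :=
  (Matrix.reindexLinearEquiv ℂ ℂ e e).toLinearMap

/-- A generalized state divergence: a function of a pair (state, positive semidefinite
operator) on a common finite-dimensional system, satisfying the data-processing inequality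
under all quantum channels. -/
structure StateDivergence : Type 1 where
  D : ∀ {ι : Type} [Fintype ι] [DecidableEq ι], Mat ι → Mat ι → EReal
  dpi : ∀ {ι κ : Type} [Fintype ι] [DecidableEq ι] [Fintype κ] [DecidableEq κ]
      (L : MatMap ι κ), IsChannel L → ∀ ρ σ : Mat ι, IsState ρ → σ.PosSemidef →
      D (L ρ) (L σ) ≤ D ρ σ

/-- The generalized channel function `𝔻[N‖M]`: supremum over all finite-dimensional
reference systems `R = Fin r` and all input states of the state divergence of the outputs. -/
def chDiv (𝔻 : StateDivergence) {ι κ : Type} [Fintype ι] [DecidableEq ι]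
    [Fintype κ] [DecidableEq κ] (N M : MatMap ι κ) : EReal :=
  ⨆ (r : ℕ) (ρ : {ρ : Mat (Fin r × ι) // IsState ρ}),
    𝔻.D (tensorMap (LinearMap.id : MatMap (Fin r) (Fin r)) N ρ.1)
        (tensorMap (LinearMap.id : MatMap (Fin r) (Fin r)) M ρ.1)

/-- The generalized conditional entropy of a bipartite channel,
`𝐒[A|B]_N = −inf_M 𝔻[N ‖ R_{A'→A} ⊗ M_{B'→B}]`. -/
def condEnt (𝔻 : StateDivergence) {α' β' α β : Type}
    [Fintype α'] [DecidableEq α'] [Fintype β'] [DecidableEq β']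
    [Fintype α] [DecidableEq α] [Fintype β] [DecidableEq β]
    (N : MatMap (α' × β') (α × β)) : EReal :=
  - ⨅ (M : {M : MatMap β' β // IsChannel M}),
      chDiv 𝔻 N (tensorMap (Rmap α' α) M.1)

/-! For every channel `M` on the conditioning side, `Θ(M)` is again a channel, and by the
interchange law and `Θ̂(R) = R` the superchannel `Θ̂ ⊗ Θ` sends `R ⊗ M` to `R ⊗ Θ(M)`. It therefore
suffices that a common superchannel contracts the channel function, `𝔻[Θ(N)‖Θ(M)] ≤ 𝔻[N‖M]`.
This is data processing once the environment `E` of the superchannel is moved into the reference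
system: up to relabelling, `id_S ⊗ Θ(K) = (id_S ⊗ post) ∘ (id_{S×E} ⊗ K) ∘ (id_S ⊗ pre)`. -/

local notation "id[" S "]" => (LinearMap.id : MatMap S S)

section TensorMap

variable {S T ι κ μ ι₁ κ₁ μ₁ ι₂ κ₂ μ₂ : Type}

theorem map_eq_sum_single [Fintype ι] [DecidableEq ι] (L : MatMap ι κ) (X : Mat ι) :
    L X = ∑ k, ∑ l, X k l • L (single k l 1) := by
  conv_lhs => rw [matrix_eq_sum_single X]
  simp only [map_sum, ← L.map_smul, smul_single, smul_eq_mul, mul_one]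

theorem matMap_ext [Fintype ι] [DecidableEq ι] {M : Type} [AddCommMonoid M] [Module ℂ M]
    {L L' : Mat ι →ₗ[ℂ] M}
    (h : ∀ k l, L (single k l 1) = L' (single k l 1)) : L = L' :=
  (stdBasis ℂ ι ι).ext fun ⟨k, l⟩ => by simpa only [stdBasis_eq_single] using h k l

theorem tensorMap_kronecker [Fintype ι₁] [DecidableEq ι₁] [Fintype ι₂] [DecidableEq ι₂]
    (L₁ : MatMap ι₁ κ₁) (L₂ : MatMap ι₂ κ₂) (A : Mat ι₁) (B : Mat ι₂) :
    tensorMap L₁ L₂ (A ⊗ₖ B) = L₁ A ⊗ₖ L₂ B := by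
  ext ⟨p₁, p₂⟩ ⟨q₁, q₂⟩
  rw [map_eq_sum_single L₁ A, map_eq_sum_single L₂ B]
  simp only [tensorMap, LinearMap.coe_mk, AddHom.coe_mk, of_apply, kroneckerMap_apply,
    Matrix.sum_apply, Matrix.smul_apply, smul_eq_mul, Finset.sum_mul]
  simp only [Finset.mul_sum]
  refine Finset.sum_congr rfl fun k₁ _ => Finset.sum_congr rfl fun l₁ _ =>
    Finset.sum_congr rfl fun k₂ _ => Finset.sum_congr rfl fun l₂ _ => by ring

theorem single_prod_one [DecidableEq ι₁] [DecidableEq ι₂] (k₁ l₁ : ι₁) (k₂ l₂ : ι₂) :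
    single (k₁, k₂) (l₁, l₂) (1 : ℂ) = single k₁ l₁ 1 ⊗ₖ single k₂ l₂ 1 := by
  rw [single_kronecker_single, mul_one]

theorem tensorMap_ext [Fintype ι₁] [DecidableEq ι₁] [Fintype ι₂] [DecidableEq ι₂]
    {M : Type} [AddCommMonoid M] [Module ℂ M] {L L' : Mat (ι₁ × ι₂) →ₗ[ℂ] M}
    (h : ∀ (A : Mat ι₁) (B : Mat ι₂), L (A ⊗ₖ B) = L' (A ⊗ₖ B)) : L = L' :=
  matMap_ext fun ⟨k₁, k₂⟩ ⟨l₁, l₂⟩ => by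
    simpa only [single_prod_one] using h (single k₁ l₁ 1) (single k₂ l₂ 1)

theorem tensorMap_comp [Fintype ι₁] [DecidableEq ι₁] [Fintype ι₂] [DecidableEq ι₂]
    [Fintype κ₁] [DecidableEq κ₁] [Fintype κ₂] [DecidableEq κ₂]
    (L₁ : MatMap κ₁ μ₁) (K₁ : MatMap ι₁ κ₁) (L₂ : MatMap κ₂ μ₂) (K₂ : MatMap ι₂ κ₂) :
    tensorMap (L₁ ∘ₗ K₁) (L₂ ∘ₗ K₂) = tensorMap L₁ L₂ ∘ₗ tensorMap K₁ K₂ :=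
  tensorMap_ext fun A B => by simp only [LinearMap.comp_apply, tensorMap_kronecker]

theorem tensorMap_id_comp [Fintype ι₁] [DecidableEq ι₁] [Fintype ι₂] [DecidableEq ι₂]
    [Fintype κ₂] [DecidableEq κ₂] (L : MatMap κ₂ μ₂) (K : MatMap ι₂ κ₂) :
    tensorMap id[ι₁] (L ∘ₗ K) = tensorMap id[ι₁] L ∘ₗ tensorMap id[ι₁] K := by
  rw [← tensorMap_comp, LinearMap.id_comp]

theorem tensorMap_id_id [Fintype ι₁] [DecidableEq ι₁] [Fintype ι₂] [DecidableEq ι₂] :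
    tensorMap id[ι₁] id[ι₂] = LinearMap.id :=
  tensorMap_ext fun A B => by simp only [tensorMap_kronecker, LinearMap.id_apply]

theorem reindexMap_apply (e : ι ≃ κ) (X : Mat ι) (p q : κ) :
    reindexMap e X p q = X (e.symm p) (e.symm q) := rfl

theorem reindexMap_refl : reindexMap (Equiv.refl ι) = LinearMap.id := rfl

theorem reindexMap_symm_apply_reindexMap (e : ι ≃ κ) (X : Mat ι) :
    reindexMap e.symm (reindexMap e X) = X := by
  ext p q; simp [reindexMap_apply]

theorem reindexMap_prodCongr_kronecker (e₁ : ι₁ ≃ κ₁) (e₂ : ι₂ ≃ κ₂) (A : Mat ι₁)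
    (B : Mat ι₂) : reindexMap (e₁.prodCongr e₂) (A ⊗ₖ B) = reindexMap e₁ A ⊗ₖ reindexMap e₂ B :=
  rfl

theorem tensorMap_reindexMap [Fintype ι₁] [DecidableEq ι₁] [Fintype ι₂] [DecidableEq ι₂]
    (e₁ : ι₁ ≃ κ₁) (e₂ : ι₂ ≃ κ₂) :
    tensorMap (reindexMap e₁) (reindexMap e₂) = reindexMap (e₁.prodCongr e₂) :=
  tensorMap_ext fun A B => by rw [tensorMap_kronecker, reindexMap_prodCongr_kronecker]

theorem reindexMap_prodComm_kronecker (A : Mat ι₁) (B : Mat ι₂) :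
    reindexMap (Equiv.prodComm ι₁ ι₂) (A ⊗ₖ B) = B ⊗ₖ A := by
  ext ⟨p₁, p₂⟩ ⟨q₁, q₂⟩
  exact mul_comm _ _

theorem tensorMap_swap [Fintype ι₁] [DecidableEq ι₁] [Fintype ι₂] [DecidableEq ι₂]
    (L₁ : MatMap ι₁ κ₁) (L₂ : MatMap ι₂ κ₂) :
    tensorMap L₁ L₂ = reindexMap (Equiv.prodComm κ₂ κ₁) ∘ₗ tensorMap L₂ L₁ ∘ₗ
      reindexMap (Equiv.prodComm ι₁ ι₂) :=
  tensorMap_ext fun A B => by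
    simp only [LinearMap.comp_apply, reindexMap_prodComm_kronecker, tensorMap_kronecker]

def assocEnv (S ι E : Type) : S × (ι × E) ≃ (S × E) × ι :=
  ((Equiv.refl S).prodCongr (Equiv.prodComm ι E)).trans (Equiv.prodAssoc S E ι).symm

theorem reindexMap_assocEnv_kronecker {E : Type} (A : Mat S) (B : Mat ι) (C : Mat E) :
    reindexMap (assocEnv S ι E) (A ⊗ₖ (B ⊗ₖ C)) = (A ⊗ₖ C) ⊗ₖ B := by
  ext ⟨⟨s, w⟩, x⟩ ⟨⟨s', w'⟩, x'⟩
  simp only [reindexMap_apply, kroneckerMap_apply, assocEnv, Equiv.symm_trans_apply,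
    Equiv.symm_symm, Equiv.prodAssoc_apply, Equiv.prodCongr_symm, Equiv.prodCongr_apply,
    Equiv.refl_symm, Equiv.coe_refl, id_eq, Prod.map_apply, Equiv.prodComm_symm,
    Equiv.prodComm_apply, Prod.swap_prod_mk]
  ring

theorem tensorMap_id_tensorMap_id_right [Fintype S] [DecidableEq S] [Fintype ι] [DecidableEq ι]
    {E : Type} [Fintype E] [DecidableEq E] (K : MatMap ι κ) (X : Mat (S × (ι × E))) :
    tensorMap id[S] (tensorMap K id[E]) X =
      reindexMap (assocEnv S κ E).symm
        (tensorMap id[S × E] K (reindexMap (assocEnv S ι E) X)) := by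
  have hcomm : reindexMap (assocEnv S κ E) ∘ₗ tensorMap id[S] (tensorMap K id[E]) =
      tensorMap id[S × E] K ∘ₗ reindexMap (assocEnv S ι E) := by
    refine matMap_ext fun ⟨s, x, w⟩ ⟨s', x', w'⟩ => ?_
    simp only [LinearMap.comp_apply, single_prod_one, tensorMap_kronecker,
      LinearMap.id_apply, reindexMap_assocEnv_kronecker]
  rw [← LinearMap.comp_apply (tensorMap id[S × E] K), ← hcomm, LinearMap.comp_apply,
    reindexMap_symm_apply_reindexMap]

theorem tensorMap_id_eq_reindexMap [Fintype S] [DecidableEq S] [Fintype T] [DecidableEq T]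
    [Fintype ι] [DecidableEq ι] (f : S ≃ T) (K : MatMap ι κ) :
    tensorMap id[S] K = reindexMap (f.symm.prodCongr (Equiv.refl κ)) ∘ₗ tensorMap id[T] K ∘ₗ
      reindexMap (f.prodCongr (Equiv.refl ι)) :=
  tensorMap_ext fun A B => by
    simp only [LinearMap.comp_apply, reindexMap_prodCongr_kronecker, tensorMap_kronecker,
      LinearMap.id_apply, reindexMap_symm_apply_reindexMap, reindexMap_refl]

theorem reindexMap_prodProdProdComm_kronecker {α β γ δ : Type} (A : Mat α) (B : Mat β)
    (C : Mat γ) (D : Mat δ) :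
    reindexMap (Equiv.prodProdProdComm α β γ δ) ((A ⊗ₖ B) ⊗ₖ (C ⊗ₖ D)) =
      (A ⊗ₖ C) ⊗ₖ (B ⊗ₖ D) := by
  ext ⟨⟨a, c⟩, ⟨b, d⟩⟩ ⟨⟨a', c'⟩, ⟨b', d'⟩⟩
  simp only [reindexMap_apply, kroneckerMap_apply, Equiv.prodProdProdComm, Equiv.coe_fn_symm_mk]
  ring

theorem tensorMap_tensorMap_interchange {α₁ β₁ γ₁ δ₁ α₂ β₂ γ₂ δ₂ : Type}
    [Fintype α₁] [DecidableEq α₁] [Fintype β₁] [DecidableEq β₁]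
    [Fintype γ₁] [DecidableEq γ₁] [Fintype δ₁] [DecidableEq δ₁]
    (A : MatMap α₁ α₂) (B : MatMap β₁ β₂) (C : MatMap γ₁ γ₂) (D : MatMap δ₁ δ₂) :
    reindexMap (Equiv.prodProdProdComm α₂ β₂ γ₂ δ₂) ∘ₗ
        tensorMap (tensorMap A B) (tensorMap C D) ∘ₗ
        reindexMap (Equiv.prodProdProdComm α₁ γ₁ β₁ δ₁) =
      tensorMap (tensorMap A C) (tensorMap B D) :=
  matMap_ext fun ⟨⟨a, c⟩, ⟨b, d⟩⟩ ⟨⟨a', c'⟩, ⟨b', d'⟩⟩ => by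
    simp only [LinearMap.comp_apply, single_prod_one, tensorMap_kronecker,
      reindexMap_prodProdProdComm_kronecker]

end TensorMap

section Channels

variable {S ι κ μ ι₁ κ₁ ι₂ κ₂ : Type}

theorem posSemidef_reindexMap [Fintype ι] [Fintype κ] (e : ι ≃ κ) {X : Mat ι}
    (hX : X.PosSemidef) : (reindexMap e X).PosSemidef :=
  hX.submatrix e.symm

theorem IsCP.posSemidef_tensorMap_id [Fintype S] [DecidableEq S] [Fintype ι] [DecidableEq ι]
    [Fintype κ] {K : MatMap ι κ} (hK : IsCP K) {X : Mat (S × ι)} (hX : X.PosSemidef) :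
    (tensorMap id[S] K X).PosSemidef := by
  rw [tensorMap_id_eq_reindexMap (Fintype.equivFin S), LinearMap.comp_apply, LinearMap.comp_apply]
  exact posSemidef_reindexMap _ (hK _ _ (posSemidef_reindexMap _ hX))

theorem IsCP.comp [Fintype ι] [DecidableEq ι] [Fintype κ] [DecidableEq κ] [Fintype μ]
    {A : MatMap κ μ} {B : MatMap ι κ} (hA : IsCP A) (hB : IsCP B) : IsCP (A ∘ₗ B) := by
  intro r X hX
  rw [tensorMap_id_comp]
  exact hA r _ (hB r X hX)

theorem isCP_reindexMap [Fintype ι] [DecidableEq ι] [Fintype κ] [DecidableEq κ] (e : ι ≃ κ) :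
    IsCP (reindexMap e) := by
  intro r X hX
  rw [← reindexMap_refl, tensorMap_reindexMap]
  exact posSemidef_reindexMap _ hX

theorem IsCP.tensorMap_id_right [Fintype ι] [DecidableEq ι] [Fintype κ] [DecidableEq κ]
    {E : Type} [Fintype E] [DecidableEq E] {K : MatMap ι κ} (hK : IsCP K) :
    IsCP (tensorMap K id[E]) := by
  intro r X hX
  rw [tensorMap_id_tensorMap_id_right]
  exact posSemidef_reindexMap _ (hK.posSemidef_tensorMap_id (posSemidef_reindexMap _ hX))

theorem isCP_tensorMap [Fintype ι₁] [DecidableEq ι₁] [Fintype ι₂] [DecidableEq ι₂]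
    [Fintype κ₁] [DecidableEq κ₁] [Fintype κ₂] [DecidableEq κ₂]
    {L₁ : MatMap ι₁ κ₁} {L₂ : MatMap ι₂ κ₂} (h₁ : IsCP L₁) (h₂ : IsCP L₂) :
    IsCP (tensorMap L₁ L₂) := by
  have hfactor : tensorMap L₁ L₂ = (reindexMap (Equiv.prodComm κ₂ κ₁) ∘ₗ tensorMap L₂ id[κ₁] ∘ₗ
      reindexMap (Equiv.prodComm κ₁ ι₂)) ∘ₗ tensorMap L₁ id[ι₂] := by
    rw [← tensorMap_swap, ← tensorMap_comp, LinearMap.id_comp, LinearMap.comp_id]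
  rw [hfactor]
  exact ((isCP_reindexMap _).comp (h₂.tensorMap_id_right.comp (isCP_reindexMap _))).comp
    h₁.tensorMap_id_right

theorem tracePreserving_reindexMap [Fintype ι] [Fintype κ] (e : ι ≃ κ) :
    TracePreserving (reindexMap e) := fun X =>
  e.symm.sum_comp fun j => X j j

theorem tracePreserving_tensorMap [Fintype ι₁] [DecidableEq ι₁] [Fintype ι₂] [DecidableEq ι₂]
    [Fintype κ₁] [Fintype κ₂] {L₁ : MatMap ι₁ κ₁} {L₂ : MatMap ι₂ κ₂}
    (h₁ : TracePreserving L₁) (h₂ : TracePreserving L₂) :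
    TracePreserving (tensorMap L₁ L₂) := by
  have htrace : traceLinearMap _ ℂ ℂ ∘ₗ tensorMap L₁ L₂ = traceLinearMap _ ℂ ℂ :=
    tensorMap_ext fun A B => by
      simp only [LinearMap.comp_apply, traceLinearMap_apply, tensorMap_kronecker,
        trace_kronecker, h₁ A, h₂ B]
  exact LinearMap.congr_fun htrace

theorem isChannel_id [Fintype ι] [DecidableEq ι] : IsChannel id[ι] :=
  ⟨fun r X hX => by rwa [tensorMap_id_id], fun _ => rfl⟩

theorem isChannel_reindexMap [Fintype ι] [DecidableEq ι] [Fintype κ] [DecidableEq κ]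
    (e : ι ≃ κ) : IsChannel (reindexMap e) :=
  ⟨isCP_reindexMap e, tracePreserving_reindexMap e⟩

theorem IsChannel.comp [Fintype ι] [DecidableEq ι] [Fintype κ] [DecidableEq κ] [Fintype μ]
    {A : MatMap κ μ} {B : MatMap ι κ} (hA : IsChannel A) (hB : IsChannel B) :
    IsChannel (A ∘ₗ B) :=
  ⟨hA.1.comp hB.1, fun X => by rw [LinearMap.comp_apply, hA.2, hB.2]⟩

theorem isChannel_tensorMap [Fintype ι₁] [DecidableEq ι₁] [Fintype ι₂] [DecidableEq ι₂]
    [Fintype κ₁] [DecidableEq κ₁] [Fintype κ₂] [DecidableEq κ₂]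
    {L₁ : MatMap ι₁ κ₁} {L₂ : MatMap ι₂ κ₂} (h₁ : IsChannel L₁) (h₂ : IsChannel L₂) :
    IsChannel (tensorMap L₁ L₂) :=
  ⟨isCP_tensorMap h₁.1 h₂.1, tracePreserving_tensorMap h₁.2 h₂.2⟩

theorem tensorMap_id_Rmap_apply [Fintype S] [DecidableEq S] [Fintype ι] [DecidableEq ι]
    [DecidableEq κ] (X : Mat (S × ι)) :
    tensorMap id[S] (Rmap ι κ) X =
      (∑ j, X.submatrix (fun s => (s, j)) (fun s => (s, j))) ⊗ₖ (1 : Mat κ) := by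
  ext ⟨s, p⟩ ⟨t, q⟩
  simp [tensorMap, Rmap, single_apply, Matrix.trace, one_apply, Matrix.sum_apply, ite_and]

theorem isCP_Rmap [Fintype ι] [DecidableEq ι] [Fintype κ] [DecidableEq κ] :
    IsCP (Rmap ι κ) := by
  intro r X hX
  rw [tensorMap_id_Rmap_apply]
  exact (posSemidef_sum _ fun j _ => hX.submatrix _).kronecker PosSemidef.one

theorem isState_reindexMap [Fintype ι] [Fintype κ] (e : ι ≃ κ) {ρ : Mat ι} (hρ : IsState ρ) :
    IsState (reindexMap e ρ) :=
  ⟨posSemidef_reindexMap e hρ.1, by rw [tracePreserving_reindexMap e ρ, hρ.2]⟩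

theorem IsChannel.isState_tensorMap_id [Fintype S] [DecidableEq S] [Fintype ι] [DecidableEq ι]
    [Fintype κ] [DecidableEq κ] {C : MatMap ι κ} (hC : IsChannel C) {ρ : Mat (S × ι)}
    (hρ : IsState ρ) : IsState (tensorMap id[S] C ρ) :=
  ⟨hC.1.posSemidef_tensorMap_id hρ.1, by
    rw [tracePreserving_tensorMap (fun _ => rfl) hC.2 ρ, hρ.2]⟩

end Channels

section Superchannels

variable {S ι κ μ ν E : Type} [Fintype S] [DecidableEq S] [Fintype ι] [DecidableEq ι]
  [Fintype κ] [DecidableEq κ] [Fintype μ] [DecidableEq μ] [Fintype E] [DecidableEq E]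

theorem le_chDiv (𝔻 : StateDivergence) {N M : MatMap ι κ} (hN : IsChannel N) (hM : IsCP M)
    {ρ : Mat (S × ι)} (hρ : IsState ρ) :
    𝔻.D (tensorMap id[S] N ρ) (tensorMap id[S] M ρ) ≤ chDiv 𝔻 N M := by
  set f := Fintype.equivFin S
  set ρ' := reindexMap (f.prodCongr (Equiv.refl ι)) ρ
  have hρ' : IsState ρ' := isState_reindexMap _ hρ
  simp only [tensorMap_id_eq_reindexMap f, LinearMap.comp_apply]
  calc _ ≤ 𝔻.D (tensorMap id[Fin (Fintype.card S)] N ρ') (tensorMap id[_] M ρ') :=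
        𝔻.dpi _ (isChannel_reindexMap _) _ _ (hN.isState_tensorMap_id hρ')
          (hM.posSemidef_tensorMap_id hρ'.1)
    _ ≤ chDiv 𝔻 N M := le_iSup₂_of_le _ ⟨ρ', hρ'⟩ le_rfl

def superchannelMap (pre : MatMap μ (ι × E)) (post : MatMap (κ × E) ν) (L : MatMap ι κ) :
    MatMap μ ν :=
  post ∘ₗ tensorMap L id[E] ∘ₗ pre

theorem IsChannel.superchannelMap [Fintype ν] {pre : MatMap μ (ι × E)} {post : MatMap (κ × E) ν}
    {L : MatMap ι κ} (hpre : IsChannel pre) (hpost : IsChannel post) (hL : IsChannel L) :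
    IsChannel (superchannelMap pre post L) :=
  hpost.comp ((isChannel_tensorMap hL isChannel_id).comp hpre)

theorem tensorMap_id_superchannelMap_apply (pre : MatMap μ (ι × E)) (post : MatMap (κ × E) ν)
    (L : MatMap ι κ) (ρ : Mat (S × μ)) :
    tensorMap id[S] (superchannelMap pre post L) ρ =
      (tensorMap id[S] post ∘ₗ reindexMap (assocEnv S κ E).symm)
        (tensorMap id[S × E] L (reindexMap (assocEnv S ι E) (tensorMap id[S] pre ρ))) := by
  simp only [superchannelMap, tensorMap_id_comp, LinearMap.comp_apply,
    tensorMap_id_tensorMap_id_right]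

theorem chDiv_superchannelMap_le [Fintype ν] [DecidableEq ν] (𝔻 : StateDivergence)
    {pre : MatMap μ (ι × E)} {post : MatMap (κ × E) ν} (hpre : IsChannel pre)
    (hpost : IsChannel post)
    {N M : MatMap ι κ} (hN : IsChannel N) (hM : IsCP M) :
    chDiv 𝔻 (superchannelMap pre post N) (superchannelMap pre post M) ≤ chDiv 𝔻 N M := by
  refine iSup₂_le fun r ρ => ?_
  have hσ : IsState (reindexMap (assocEnv (Fin r) ι E) (tensorMap id[Fin r] pre ρ.1)) :=
    isState_reindexMap _ (hpre.isState_tensorMap_id ρ.2)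
  rw [tensorMap_id_superchannelMap_apply, tensorMap_id_superchannelMap_apply]
  exact (𝔻.dpi _ ((isChannel_tensorMap isChannel_id hpost).comp (isChannel_reindexMap _)) _ _
    (hN.isState_tensorMap_id hσ) (hM.posSemidef_tensorMap_id hσ.1)).trans (le_chDiv 𝔻 hN hM hσ)

end Superchannels

section Interchange

variable {ι₁ κ₁ μ₁ ν₁ E₁ ι₂ κ₂ μ₂ ν₂ E₂ : Type}
  [Fintype ι₁] [DecidableEq ι₁] [Fintype κ₁] [DecidableEq κ₁] [Fintype μ₁] [DecidableEq μ₁]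
  [Fintype E₁] [DecidableEq E₁] [Fintype ι₂] [DecidableEq ι₂] [Fintype κ₂] [DecidableEq κ₂]
  [Fintype μ₂] [DecidableEq μ₂] [Fintype E₂] [DecidableEq E₂]

theorem superchannelMap_tensorMap [Fintype ν₁] [DecidableEq ν₁] [Fintype ν₂] [DecidableEq ν₂]
    (pre₁ : MatMap μ₁ (ι₁ × E₁)) (post₁ : MatMap (κ₁ × E₁) ν₁)
    (pre₂ : MatMap μ₂ (ι₂ × E₂)) (post₂ : MatMap (κ₂ × E₂) ν₂)
    (A : MatMap ι₁ κ₁) (B : MatMap ι₂ κ₂) :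
    superchannelMap (reindexMap (Equiv.prodProdProdComm ι₁ E₁ ι₂ E₂) ∘ₗ tensorMap pre₁ pre₂)
        (tensorMap post₁ post₂ ∘ₗ reindexMap (Equiv.prodProdProdComm κ₁ κ₂ E₁ E₂))
        (tensorMap A B) =
      tensorMap (superchannelMap pre₁ post₁ A) (superchannelMap pre₂ post₂ B) := by
  simp only [superchannelMap, tensorMap_comp]
  rw [← tensorMap_tensorMap_interchange, tensorMap_id_id]
  simp only [LinearMap.comp_assoc]

end Interchange

/-- the generalized conditional entropy is nondecreasing under a local
`R`-preserving superchannel on the nonconditioning side and an arbitrary local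
superchannel on the conditioning side. -/
theorem stmt3 (𝔻 : StateDivergence) (a' a b' b c' c d' d e₁ e₂ : ℕ)
    (N : MatMap (Fin a' × Fin b') (Fin a × Fin b)) (hN : IsChannel N)
    (pre₁ : MatMap (Fin c') (Fin a' × Fin e₁)) (hpre₁ : IsChannel pre₁)
    (post₁ : MatMap (Fin a × Fin e₁) (Fin c)) (hpost₁ : IsChannel post₁)
    (hRpres : post₁ ∘ₗ (tensorMap (Rmap (Fin a') (Fin a))
        (LinearMap.id : MatMap (Fin e₁) (Fin e₁))) ∘ₗ pre₁ = Rmap (Fin c') (Fin c))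
    (pre₂ : MatMap (Fin d') (Fin b' × Fin e₂)) (hpre₂ : IsChannel pre₂)
    (post₂ : MatMap (Fin b × Fin e₂) (Fin d)) (hpost₂ : IsChannel post₂) :
    condEnt 𝔻 N
      ≤ condEnt 𝔻 ((tensorMap post₁ post₂)
          ∘ₗ reindexMap (Equiv.prodProdProdComm (Fin a) (Fin b) (Fin e₁) (Fin e₂))
          ∘ₗ (tensorMap N (LinearMap.id : MatMap (Fin e₁ × Fin e₂) (Fin e₁ × Fin e₂)))
          ∘ₗ reindexMap (Equiv.prodProdProdComm (Fin a') (Fin e₁) (Fin b') (Fin e₂))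
          ∘ₗ (tensorMap pre₁ pre₂)) := by
  rw [condEnt, condEnt, EReal.neg_le_neg_iff]
  refine le_iInf fun M => iInf_le_of_le ⟨_, hpre₂.superchannelMap hpost₂ M.2⟩ ?_
  have hpre : IsChannel (reindexMap (Equiv.prodProdProdComm (Fin a') (Fin e₁) (Fin b') (Fin e₂))
      ∘ₗ tensorMap pre₁ pre₂) :=
    (isChannel_reindexMap _).comp (isChannel_tensorMap hpre₁ hpre₂)
  have hpost : IsChannel (tensorMap post₁ post₂
      ∘ₗ reindexMap (Equiv.prodProdProdComm (Fin a) (Fin b) (Fin e₁) (Fin e₂))) :=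
    (isChannel_tensorMap hpost₁ hpost₂).comp (isChannel_reindexMap _)
  have hΘR : superchannelMap pre₁ post₁ (Rmap (Fin a') (Fin a)) = Rmap (Fin c') (Fin c) :=
    hRpres
  dsimp only
  rw [← hΘR, ← superchannelMap_tensorMap]
  exact chDiv_superchannelMap_le 𝔻 hpre hpost hN (isCP_tensorMap isCP_Rmap M.2.1)

end
end QIT
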